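/- Let D ≥ 1 and let l : ℝ^D → ℝ be differentiable everywhere, bounded below with infimum inf l, and have an L-Lipschitz gradient. Fix γ > 0, δ⁰ ∈ ℝ^D, step sizes ε₀, …, ε_{T−1} > 0, and independent Gaussian perturbations z₀, …, z_{T−1} as above, with iterates δ^{t+1} = δ^t − ε_t·sign(∇l(δ^t) + γ z_t). Suppose there is a constant c > 0 such that almost surely, for every t < T and every coordinate i, |∂_i l(δ^t)|·(2Φ(|∂_i l(δ^t)|/γ) − 1) ≥ c·|∂_i l(δ^t)|. Then min_{0 ≤ t < T} E[‖∇l(δ^t)‖₁] ≤ ( l(δ⁰) − inf l + (L·D/2)·Σ_{t=0}^{T−1} ε_t² ) / ( c·Σ_{t=0}^{T−1} ε_t ), where ‖v‖₁ = Σ_i |v_i| is the ℓ₁ norm on ℝ^D. -/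

import Mathlib

/-!
By the descent lemma for the `L`-smooth function `l`, one step of the iteration gives
`l(δ^{t+1}) ≤ l(δ^t) - ε_t ⟪∇l(δ^t), s_t⟫ + (L D / 2) ε_t²`, where
`s_t = sign(∇l(δ^t) + γ z_t)` satisfies `‖s_t‖² ≤ D`. The iterate `δ^t` depends only on
`z_0, …, z_{t-1}`, so the expectation of `⟪∇l(δ^t), s_t⟫` can be computed by integrating out
`z_t` first; coordinatewise `E[sign(a + γ Z)] = 2Φ(a/γ) - 1`, which gives
`E⟪∇l(δ^t), s_t⟫ = E ∑ᵢ |∂ᵢl(δ^t)| (2Φ(|∂ᵢl(δ^t)|/γ) - 1) ≥ c E‖∇l(δ^t)‖₁`.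
Telescoping over `t` and bounding `E l(δ^T)` below by `inf l` gives the estimate. All iterates
stay in a fixed ball around `δ⁰`, so every integrand involved is bounded.
-/

open MeasureTheory ProbabilityTheory

noncomputable def Phi (x : ℝ) : ℝ := ((gaussianReal 0 1) (Set.Iic x)).toReal

noncomputable def prodGaussian (T D : ℕ) : Measure (Fin T → Fin D → ℝ) :=
  Measure.pi fun _ => Measure.pi fun _ => gaussianReal 0 1

open Set Function

instance : NullSingletonClass (gaussianReal 0 1) := nullSingletonClass_gaussianReal one_ne_zero

instance (T D : ℕ) : IsProbabilityMeasure (prodGaussian T D) := by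
  unfold prodGaussian
  infer_instance

lemma Phi_eq_cdf (x : ℝ) : Phi x = cdf (gaussianReal 0 1) x :=
  (cdf_eq_real _ x).symm

@[fun_prop]
lemma measurable_Phi : Measurable Phi := by
  simpa only [funext Phi_eq_cdf] using (monotone_cdf (gaussianReal 0 1)).measurable

lemma abs_two_mul_Phi_sub_one_le (x : ℝ) : |2 * Phi x - 1| ≤ 1 := by
  have h0 := cdf_nonneg (gaussianReal 0 1) x
  have h1 := cdf_le_one (gaussianReal 0 1) x
  rw [Phi_eq_cdf, abs_le]
  constructor <;> linarith

lemma Phi_neg (x : ℝ) : Phi (-x) = 1 - Phi x := by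
  have hsymm : (gaussianReal 0 1).map Neg.neg = gaussianReal 0 1 := by
    simpa using gaussianReal_map_neg (μ := 0) (v := 1)
  have hIic : (gaussianReal 0 1).real (Iic (-x)) = (gaussianReal 0 1).real (Ioi x) := by
    conv_lhs => rw [← hsymm]
    rw [map_measureReal_apply measurable_neg measurableSet_Iic, neg_preimage, neg_Iic, neg_neg,
      measureReal_congr Ioi_ae_eq_Ici]
  rw [Phi, Phi, ← measureReal_def, ← measureReal_def, hIic, ← compl_Iic,
    probReal_compl_eq_one_sub measurableSet_Iic]

lemma mul_two_mul_Phi_sub_one_eq_abs_mul (a γ : ℝ) :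
    a * (2 * Phi (a / γ) - 1) = |a| * (2 * Phi (|a| / γ) - 1) := by
  rcases le_or_gt 0 a with ha | ha
  · rw [abs_of_nonneg ha]
  · rw [abs_of_neg ha, neg_div, Phi_neg]
    ring

@[fun_prop]
lemma Real.measurable_sign : Measurable Real.sign :=
  Measurable.ite measurableSet_Iio measurable_const
    (Measurable.ite measurableSet_Ioi measurable_const measurable_const)

lemma Real.abs_sign_le_one (r : ℝ) : |Real.sign r| ≤ 1 := by
  rcases Real.sign_apply_eq r with h | h | h <;> simp [h]

lemma integral_sign_add_mul_gaussianReal {a γ : ℝ} (hγ : 0 < γ) :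
    ∫ z, Real.sign (a + γ * z) ∂gaussianReal 0 1 = 2 * Phi (a / γ) - 1 := by
  set b := -(a / γ)
  -- the tie `z = b` is a null event
  have hae : (fun z => Real.sign (a + γ * z)) =ᵐ[gaussianReal 0 1]
      fun z => 1 - 2 * (Iic b).indicator 1 z := by
    filter_upwards [Measure.ae_ne _ b] with z hz
    have hab : a + γ * z = γ * (z - b) := by simp only [b]; field_simp; ring
    rcases hz.lt_or_gt with hzb | hzb
    · norm_num [hab, Real.sign_of_neg (mul_neg_of_pos_of_neg hγ (sub_neg.2 hzb)), hzb.le]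
    · simp [hab, Real.sign_of_pos (mul_pos hγ (sub_pos.2 hzb)), hzb]
  rw [integral_congr_ae hae, integral_sub (integrable_const _)
    (((integrable_const 1).indicator measurableSet_Iic).const_mul _), integral_const_mul,
    integral_indicator_one measurableSet_Iic, integral_const, probReal_univ, one_smul,
    show (gaussianReal 0 1).real (Iic b) = Phi b from rfl, Phi_neg]
  ring

section NoisySign

variable {ι : Type*} (g : EuclideanSpace ℝ ι) (γ : ℝ) (z : ι → ℝ)

noncomputable def noisySign : EuclideanSpace ℝ ι :=
  WithLp.toLp 2 fun i => Real.sign (g i + γ * z i)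

variable [Fintype ι]

lemma norm_noisySign_le : ‖noisySign g γ z‖ ≤ √(Fintype.card ι) := by
  rw [EuclideanSpace.norm_eq]
  gcongr
  calc ∑ i, ‖Real.sign (g i + γ * z i)‖ ^ 2 ≤ ∑ _i : ι, (1 : ℝ) := by
        gcongr with i
        rw [Real.norm_eq_abs, sq_le_one_iff_abs_le_one, abs_abs]
        exact Real.abs_sign_le_one _
    _ = Fintype.card ι := by simp

lemma inner_noisySign :
    inner ℝ g (noisySign g γ z) = ∑ i, g i * Real.sign (g i + γ * z i) := by
  simp [noisySign, PiLp.inner_apply, mul_comm]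

lemma integral_inner_noisySign {γ : ℝ} (hγ : 0 < γ) :
    ∫ z, inner ℝ g (noisySign g γ z) ∂Measure.pi (fun _ : ι => gaussianReal 0 1) =
      ∑ i, |g i| * (2 * Phi (|g i| / γ) - 1) := by
  simp_rw [inner_noisySign]
  rw [integral_finsetSum]
  · refine Finset.sum_congr rfl fun i _ => ?_
    rw [integral_const_mul, integral_comp_eval (μ := fun _ => gaussianReal 0 1)
      (f := fun x => Real.sign (g i + γ * x)) (Measurable.aestronglyMeasurable (by fun_prop)),
      integral_sign_add_mul_gaussianReal hγ, mul_two_mul_Phi_sub_one_eq_abs_mul]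
  · intro i _
    refine Integrable.of_bound (Measurable.aestronglyMeasurable (by fun_prop)) |g i|
      (ae_of_all _ fun z => ?_)
    rw [norm_mul, Real.norm_eq_abs, Real.norm_eq_abs]
    exact mul_le_of_le_one_right (abs_nonneg _) (Real.abs_sign_le_one _)

end NoisySign

lemma continuous_of_forall_norm_sub_le {E F : Type*} [SeminormedAddCommGroup E]
    [SeminormedAddCommGroup F] {g : E → F} {L : ℝ} (h : ∀ a b, ‖g a - g b‖ ≤ L * ‖a - b‖) :
    Continuous g :=
  (LipschitzWith.of_dist_le' (K := L) (by simpa only [dist_eq_norm] using h)).continuous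

lemma nonneg_of_forall_norm_sub_le {E F : Type*} [NormedAddCommGroup E] [Nontrivial E]
    [SeminormedAddCommGroup F] {g : E → F} {L : ℝ} (h : ∀ a b, ‖g a - g b‖ ≤ L * ‖a - b‖) :
    0 ≤ L := by
  obtain ⟨a, ha⟩ := exists_ne (0 : E)
  have hL := (norm_nonneg _).trans (h a 0)
  rw [sub_zero] at hL
  exact nonneg_of_mul_nonneg_left hL (norm_pos_iff.2 ha)

theorem descent_lemma {E : Type*} [NormedAddCommGroup E] [InnerProductSpace ℝ E] [CompleteSpace E]
    {f : E → ℝ} (hf : Differentiable ℝ f) {L : ℝ}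
    (hL : ∀ a b, ‖gradient f a - gradient f b‖ ≤ L * ‖a - b‖) (x y : E) :
    f y ≤ f x + inner ℝ (gradient f x) (y - x) + L / 2 * ‖y - x‖ ^ 2 := by
  set v := y - x
  -- `φ` is antitone on `[0, ∞)`: the Lipschitz bound makes its derivative nonpositive there
  set φ : ℝ → ℝ := fun s =>
    f (x + s • v) - s * inner ℝ (gradient f x) v - L / 2 * s ^ 2 * ‖v‖ ^ 2 with hφ
  have hderiv (s : ℝ) : HasDerivAt φ
      (inner ℝ (gradient f (x + s • v) - gradient f x) v - L * s * ‖v‖ ^ 2) s := by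
    have hline : HasDerivAt (fun s : ℝ => x + s • v) v s := by
      simpa using ((hasDerivAt_id s).smul_const v).const_add x
    have hf' : HasDerivAt (fun s : ℝ => f (x + s • v)) (inner ℝ (gradient f (x + s • v)) v) s := by
      rw [inner_gradient_left]
      exact (hf _).hasFDerivAt.comp_hasDerivAt s hline
    have hlin : HasDerivAt (fun s : ℝ => s * inner ℝ (gradient f x) v)
        (inner ℝ (gradient f x) v) s := by
      simpa using (hasDerivAt_id s).mul_const (inner ℝ (gradient f x) v)
    have hquad : HasDerivAt (fun s : ℝ => L / 2 * s ^ 2 * ‖v‖ ^ 2) (L * s * ‖v‖ ^ 2) s :=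
      (((hasDerivAt_pow 2 s).const_mul (L / 2)).mul_const (‖v‖ ^ 2)).congr_deriv
        (by push_cast; ring)
    exact ((hf'.sub hlin).sub hquad).congr_deriv (by rw [inner_sub_left])
  have hanti : AntitoneOn φ (Ici 0) := by
    refine antitoneOn_of_hasDerivWithinAt_nonpos (convex_Ici 0)
      (HasDerivAt.continuousOn fun s _ => hderiv s) (fun s _ => (hderiv s).hasDerivWithinAt)
      fun s hs => ?_
    rw [interior_Ici, mem_Ioi] at hs
    have hgrad : ‖gradient f (x + s • v) - gradient f x‖ ≤ L * (s * ‖v‖) := by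
      simpa [norm_smul, abs_of_pos hs] using hL (x + s • v) x
    nlinarith [real_inner_le_norm (gradient f (x + s • v) - gradient f x) v, norm_nonneg v,
      mul_le_mul_of_nonneg_right hgrad (norm_nonneg v)]
  calc f y = φ 1 + inner ℝ (gradient f x) v + L / 2 * ‖v‖ ^ 2 := by
        simp only [hφ, v, one_smul, add_sub_cancel, one_mul, one_pow]; ring
    _ ≤ φ 0 + inner ℝ (gradient f x) v + L / 2 * ‖v‖ ^ 2 := by
        gcongr
        exact hanti self_mem_Ici (mem_Ici.2 zero_le_one) zero_le_one
    _ = f x + inner ℝ (gradient f x) (y - x) + L / 2 * ‖y - x‖ ^ 2 := by simp [hφ, v]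

lemma le_add_sum_of_forall_succ_le {T : ℕ} {a : ℕ → ℝ} {d : Fin T → ℝ}
    (h : ∀ t : Fin T, a (t + 1) ≤ a t + d t) : a T ≤ a 0 + ∑ t, d t := by
  have hsum := Finset.sum_le_sum fun t (_ : t ∈ Finset.univ) => sub_le_iff_le_add'.2 (h t)
  rw [Fin.sum_univ_eq_sum_range (fun i => a (i + 1) - a i), Finset.sum_range_sub] at hsum
  linarith

section UpdateCoordinate

variable {ι : Type*} [Fintype ι] [DecidableEq ι] {X : ι → Type*} [∀ i, MeasurableSpace (X i)]
  (μ : ∀ i, Measure (X i)) [∀ i, IsProbabilityMeasure (μ i)]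

theorem measurePreserving_update (t : ι) :
    MeasurePreserving (fun p : (∀ i, X i) × X t => update p.1 t p.2)
      ((Measure.pi μ).prod (μ t)) (Measure.pi μ) := by
  refine ⟨measurable_update', (Measure.pi_eq fun s hs => ?_).symm⟩
  have hpre : (fun p : (∀ i, X i) × X t => update p.1 t p.2) ⁻¹' univ.pi s =
      univ.pi (update s t univ) ×ˢ s t := by
    ext ⟨ω, z⟩
    simp only [mem_preimage, mem_pi, mem_univ, true_implies, mem_prod]
    constructor
    · intro h
      refine ⟨fun i => ?_, by simpa using h t⟩
      rcases eq_or_ne i t with rfl | hi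
      · simp
      · simpa [hi] using h i
    · rintro ⟨h, hz⟩ i
      rcases eq_or_ne i t with rfl | hi
      · simpa using hz
      · simpa [hi] using h i
  rw [Measure.map_apply measurable_update' (.univ_pi hs), hpre, Measure.prod_prod,
    Measure.pi_pi, ← Finset.prod_erase_mul _ _ (Finset.mem_univ t),
    ← Finset.prod_erase_mul _ _ (Finset.mem_univ t)]
  simp only [update_self, measure_univ, mul_one]
  congr 1
  refine Finset.prod_congr rfl fun j hj => ?_
  rw [update_of_ne (Finset.ne_of_mem_erase hj)]

theorem integral_pi_eq_integral_integral_update {E : Type*} [NormedAddCommGroup E]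
    [NormedSpace ℝ E] (t : ι) {F : (∀ i, X i) → E} (hF : Integrable F (Measure.pi μ)) :
    ∫ ω, F ω ∂Measure.pi μ = ∫ ω, ∫ z, F (update ω t z) ∂μ t ∂Measure.pi μ := by
  have h := measurePreserving_update μ t
  have hmap := integral_map (f := F) h.measurable.aemeasurable
    (h.map_eq ▸ hF.aestronglyMeasurable)
  rw [h.map_eq] at hmap
  exact hmap.trans (integral_prod _ (h.integrable_comp_of_integrable hF))

end UpdateCoordinate

/-- Row `t` of the noise `ω` is the perturbation `z_t`. -/
structure IsSignGradientTrajectory {D T : ℕ} (l : EuclideanSpace ℝ (Fin D) → ℝ) (γ : ℝ)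
    (ε : Fin T → ℝ) (δ0 : EuclideanSpace ℝ (Fin D))
    (δ : ℕ → (Fin T → Fin D → ℝ) → EuclideanSpace ℝ (Fin D)) : Prop where
  zero : ∀ ω, δ 0 ω = δ0
  succ : ∀ (t : Fin T) ω, δ (t + 1) ω = δ t ω - ε t • noisySign (gradient l (δ t ω)) γ (ω t)

namespace IsSignGradientTrajectory

variable {D T : ℕ} {l : EuclideanSpace ℝ (Fin D) → ℝ} {γ : ℝ} {ε : Fin T → ℝ}
  {δ0 : EuclideanSpace ℝ (Fin D)} {δ : ℕ → (Fin T → Fin D → ℝ) → EuclideanSpace ℝ (Fin D)}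
  {L : ℝ}

lemma apply_update_eq (hδ : IsSignGradientTrajectory l γ ε δ0 δ) {n : ℕ} {s : Fin T}
    (hns : n ≤ s) (ω : Fin T → Fin D → ℝ) (z : Fin D → ℝ) : δ n (update ω s z) = δ n ω := by
  induction n with
  | zero => rw [hδ.zero, hδ.zero]
  | succ n ih =>
    have hn : n < T := by omega
    have hne : (⟨n, hn⟩ : Fin T) ≠ s := fun h => by rw [← h] at hns; simp at hns
    rw [show n = ((⟨n, hn⟩ : Fin T) : ℕ) from rfl, hδ.succ, hδ.succ, ih (by omega),
      update_of_ne hne]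

lemma measurable (hδ : IsSignGradientTrajectory l γ ε δ0 δ) (hgrad : Continuous (gradient l))
    {n : ℕ} (hn : n ≤ T) : Measurable (δ n) := by
  induction n with
  | zero => simpa only [funext hδ.zero] using measurable_const
  | succ n ih =>
    have hn' : n < T := by omega
    have hsucc : δ (n + 1) = fun ω => δ n ω - ε ⟨n, hn'⟩ •
        noisySign (gradient l (δ n ω)) γ (ω ⟨n, hn'⟩) := funext (hδ.succ ⟨n, hn'⟩)
    have hδn := ih (by omega)
    rw [hsucc]
    unfold noisySign
    fun_prop

lemma exists_forall_mem_closedBall (hδ : IsSignGradientTrajectory l γ ε δ0 δ) :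
    ∃ R, ∀ n ≤ T, ∀ ω, δ n ω ∈ Metric.closedBall δ0 R := by
  set r := (∑ t, |ε t|) * √D
  have hstep (t : Fin T) (ω) : ‖ε t • noisySign (gradient l (δ t ω)) γ (ω t)‖ ≤ r := by
    rw [norm_smul, Real.norm_eq_abs]
    exact mul_le_mul (Finset.single_le_sum (fun t _ => abs_nonneg (ε t)) (Finset.mem_univ t))
      (by simpa using norm_noisySign_le (gradient l (δ t ω)) γ (ω t)) (norm_nonneg _)
      (Finset.sum_nonneg fun t _ => abs_nonneg (ε t))
  have hdist (n : ℕ) (hn : n ≤ T) (ω) : ‖δ n ω - δ0‖ ≤ n * r := by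
    induction n with
    | zero => simp [hδ.zero]
    | succ n ih =>
      have hn' : n < T := by omega
      rw [show n = ((⟨n, hn'⟩ : Fin T) : ℕ) from rfl, hδ.succ, sub_right_comm]
      push_cast
      linarith [norm_sub_le (δ n ω - δ0)
        (ε ⟨n, hn'⟩ • noisySign (gradient l (δ n ω)) γ (ω ⟨n, hn'⟩)),
        ih (by omega), hstep ⟨n, hn'⟩ ω]
  have hr : 0 ≤ r := by positivity
  refine ⟨T * r, fun n hn ω => ?_⟩
  rw [mem_closedBall_iff_norm]
  exact (hdist n hn ω).trans (by gcongr)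

lemma exists_forall_norm_le (hδ : IsSignGradientTrajectory l γ ε δ0 δ)
    {F : Type*} [SeminormedAddCommGroup F] {f : EuclideanSpace ℝ (Fin D) → F}
    (hf : Continuous f) : ∃ M, ∀ n ≤ T, ∀ ω, ‖f (δ n ω)‖ ≤ M := by
  obtain ⟨R, hR⟩ := hδ.exists_forall_mem_closedBall
  obtain ⟨M, hM⟩ := (isCompact_closedBall δ0 R).exists_bound_of_continuousOn hf.continuousOn
  exact ⟨M, fun n hn ω => hM _ (hR n hn ω)⟩

lemma integrable_comp (hδ : IsSignGradientTrajectory l γ ε δ0 δ)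
    (hgrad : Continuous (gradient l)) {f : EuclideanSpace ℝ (Fin D) → ℝ} (hf : Continuous f)
    {n : ℕ} (hn : n ≤ T) {μ : Measure (Fin T → Fin D → ℝ)} [IsFiniteMeasure μ] :
    Integrable (fun ω => f (δ n ω)) μ := by
  obtain ⟨M, hM⟩ := hδ.exists_forall_norm_le hf
  exact .of_bound (hf.measurable.comp (hδ.measurable hgrad hn)).aestronglyMeasurable M
    (ae_of_all _ (hM n hn))

lemma integrable_inner_noisySign (hδ : IsSignGradientTrajectory l γ ε δ0 δ)
    (hgrad : Continuous (gradient l)) (t : Fin T) {μ : Measure (Fin T → Fin D → ℝ)}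
    [IsFiniteMeasure μ] :
    Integrable (fun ω => inner ℝ (gradient l (δ t ω))
      (noisySign (gradient l (δ t ω)) γ (ω t))) μ := by
  obtain ⟨M, hM⟩ := hδ.exists_forall_norm_le hgrad
  have hδt := hδ.measurable hgrad t.is_lt.le
  have hgrad_meas := hgrad.measurable
  refine .of_bound (Measurable.aestronglyMeasurable ?_) (M * √D) (ae_of_all _ fun ω => ?_)
  · unfold noisySign
    fun_prop
  · refine (norm_inner_le_norm _ _).trans (mul_le_mul (hM t t.is_lt.le ω) ?_ (norm_nonneg _) ?_)
    · simpa using norm_noisySign_le (gradient l (δ t ω)) γ (ω t)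
    · exact (norm_nonneg _).trans (hM t t.is_lt.le ω)

lemma apply_succ_le (hδ : IsSignGradientTrajectory l γ ε δ0 δ) (hl : Differentiable ℝ l)
    (hL0 : 0 ≤ L) (hL : ∀ a b, ‖gradient l a - gradient l b‖ ≤ L * ‖a - b‖) (t : Fin T)
    (ω : Fin T → Fin D → ℝ) :
    l (δ (t + 1) ω) ≤ l (δ t ω) -
      ε t * inner ℝ (gradient l (δ t ω)) (noisySign (gradient l (δ t ω)) γ (ω t)) +
      L * D / 2 * ε t ^ 2 := by
  set s := noisySign (gradient l (δ t ω)) γ (ω t)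
  have hs : ‖s‖ ^ 2 ≤ D := by
    simpa using pow_le_pow_left₀ (norm_nonneg _) (norm_noisySign_le (gradient l (δ t ω)) γ (ω t)) 2
  have hdesc := descent_lemma hl hL (δ t ω) (δ t ω - ε t • s)
  rw [hδ.succ]
  rw [sub_sub_cancel_left, inner_neg_right, real_inner_smul_right, norm_neg, norm_smul,
    mul_pow, Real.norm_eq_abs, sq_abs] at hdesc
  nlinarith [mul_le_mul_of_nonneg_left hs (mul_nonneg hL0 (sq_nonneg (ε t)))]

lemma integral_succ_le (hδ : IsSignGradientTrajectory l γ ε δ0 δ) (hl : Differentiable ℝ l)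
    (hL0 : 0 ≤ L) (hL : ∀ a b, ‖gradient l a - gradient l b‖ ≤ L * ‖a - b‖) (t : Fin T)
    {μ : Measure (Fin T → Fin D → ℝ)} [IsProbabilityMeasure μ] :
    ∫ ω, l (δ (t + 1) ω) ∂μ ≤ ∫ ω, l (δ t ω) ∂μ -
      ε t * ∫ ω, inner ℝ (gradient l (δ t ω)) (noisySign (gradient l (δ t ω)) γ (ω t)) ∂μ +
      L * D / 2 * ε t ^ 2 := by
  have hgrad := continuous_of_forall_norm_sub_le hL
  have hint {n : ℕ} (hn : n ≤ T) := hδ.integrable_comp (μ := μ) hgrad hl.continuous hn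
  have hinner := hδ.integrable_inner_noisySign (μ := μ) hgrad t
  have hdiff : Integrable (fun ω => l (δ t ω) - ε t * inner ℝ (gradient l (δ t ω))
      (noisySign (gradient l (δ t ω)) γ (ω t))) μ := (hint t.is_lt.le).sub (hinner.const_mul _)
  calc ∫ ω, l (δ (t + 1) ω) ∂μ
      ≤ ∫ ω, (l (δ t ω) - ε t * inner ℝ (gradient l (δ t ω))
          (noisySign (gradient l (δ t ω)) γ (ω t)) + L * D / 2 * ε t ^ 2) ∂μ :=
        integral_mono (hint t.is_lt) (hdiff.add (integrable_const _))
          (hδ.apply_succ_le hl hL0 hL t)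
    _ = _ := by
      rw [integral_add hdiff (integrable_const _), integral_sub (hint t.is_lt.le)
        (hinner.const_mul _), integral_const_mul, integral_const, probReal_univ, one_smul]

lemma integral_inner_noisySign_eq (hδ : IsSignGradientTrajectory l γ ε δ0 δ)
    (hgrad : Continuous (gradient l)) (hγ : 0 < γ) (t : Fin T) :
    ∫ ω, inner ℝ (gradient l (δ t ω)) (noisySign (gradient l (δ t ω)) γ (ω t))
        ∂prodGaussian T D =
      ∫ ω, ∑ i, |gradient l (δ t ω) i| * (2 * Phi (|gradient l (δ t ω) i| / γ) - 1)
        ∂prodGaussian T D := by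
  rw [prodGaussian, integral_pi_eq_integral_integral_update _ t
    (hδ.integrable_inner_noisySign hgrad t)]
  refine integral_congr_ae (ae_of_all _ fun ω => ?_)
  simp only [update_self, hδ.apply_update_eq le_rfl]
  exact integral_inner_noisySign _ hγ

lemma mul_integral_sum_abs_le (hδ : IsSignGradientTrajectory l γ ε δ0 δ)
    (hgrad : Continuous (gradient l)) (hγ : 0 < γ) (t : Fin T) {c : ℝ}
    (hlow : ∀ᵐ ω ∂prodGaussian T D, ∀ i, c * |gradient l (δ t ω) i| ≤
      |gradient l (δ t ω) i| * (2 * Phi (|gradient l (δ t ω) i| / γ) - 1)) :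
    c * ∫ ω, ∑ i, |gradient l (δ t ω) i| ∂prodGaussian T D ≤
      ∫ ω, inner ℝ (gradient l (δ t ω)) (noisySign (gradient l (δ t ω)) γ (ω t))
        ∂prodGaussian T D := by
  have hnorm : Integrable (fun ω => ∑ i, |gradient l (δ t ω) i|) (prodGaussian T D) :=
    hδ.integrable_comp hgrad (f := fun x => ∑ i, |gradient l x i|) (by fun_prop) t.is_lt.le
  have hweighted : Integrable (fun ω => ∑ i, |gradient l (δ t ω) i| *
      (2 * Phi (|gradient l (δ t ω) i| / γ) - 1)) (prodGaussian T D) := by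
    have hδt := hδ.measurable hgrad t.is_lt.le
    have hgrad_meas := hgrad.measurable
    have hmeas : Measurable (fun ω => ∑ i, |gradient l (δ t ω) i| *
        (2 * Phi (|gradient l (δ t ω) i| / γ) - 1)) := by fun_prop
    refine hnorm.mono' hmeas.aestronglyMeasurable (ae_of_all _ fun ω => ?_)
    refine (Finset.abs_sum_le_sum_abs _ _).trans (Finset.sum_le_sum fun i _ => ?_)
    rw [abs_mul, abs_abs]
    exact mul_le_of_le_one_right (abs_nonneg _) (abs_two_mul_Phi_sub_one_le _)
  rw [hδ.integral_inner_noisySign_eq hgrad hγ t, ← integral_const_mul]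
  refine integral_mono_ae (hnorm.const_mul c) hweighted ?_
  filter_upwards [hlow] with ω hω
  rw [Finset.mul_sum]
  exact Finset.sum_le_sum fun i _ => hω i

end IsSignGradientTrajectory

/-- convergence of perturbed FGSM/sign-gradient: for `l` differentiable,
bounded below, with `L`-Lipschitz gradient, iterates
`δ^{t+1} = δ^t − ε_t·sign(∇l(δ^t) + γ z_t)` with positive step sizes and independent
Gaussian perturbations, if almost surely
`|∂ᵢl(δ^t)| (2Φ(|∂ᵢl(δ^t)|/γ) − 1) ≥ c |∂ᵢl(δ^t)|` for all `t < T` and all `i`, then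
`min_{0 ≤ t < T} E[‖∇l(δ^t)‖₁] ≤ (l(δ⁰) − inf l + (L D / 2) Σ_t ε_t²) / (c Σ_t ε_t)`. -/
theorem stmt9 (D T : ℕ) (hD : 1 ≤ D) (hT : 0 < T)
    (l : EuclideanSpace ℝ (Fin D) → ℝ) (hl : Differentiable ℝ l)
    (hbdd : BddBelow (Set.range l))
    (L : ℝ) (hL : ∀ a b, ‖gradient l a - gradient l b‖ ≤ L * ‖a - b‖)
    (γ : ℝ) (hγ : 0 < γ)
    (δ0 : EuclideanSpace ℝ (Fin D))
    (ε : Fin T → ℝ) (hε : ∀ t, 0 < ε t)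
    (δseq : ℕ → (Fin T → Fin D → ℝ) → EuclideanSpace ℝ (Fin D))
    (hδ0 : ∀ ω, δseq 0 ω = δ0)
    (hrec : ∀ (t : Fin T) (ω : Fin T → Fin D → ℝ),
      δseq ((t : ℕ) + 1) ω = δseq (t : ℕ) ω -
        ε t • (WithLp.equiv 2 (Fin D → ℝ)).symm
          (fun i => Real.sign (gradient l (δseq (t : ℕ) ω) i + γ * ω t i)))
    (c : ℝ) (hc : 0 < c)
    (hlow : ∀ᵐ ω ∂(prodGaussian T D), ∀ (t : Fin T) (i : Fin D),
      c * |gradient l (δseq (t : ℕ) ω) i| ≤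
        |gradient l (δseq (t : ℕ) ω) i| *
          (2 * Phi (|gradient l (δseq (t : ℕ) ω) i| / γ) - 1)) :
    (⨅ t : Fin T, ∫ ω, (∑ i, |gradient l (δseq (t : ℕ) ω) i|) ∂(prodGaussian T D)) ≤
      (l δ0 - sInf (Set.range l) + L * D / 2 * ∑ t : Fin T, (ε t) ^ 2) /
        (c * ∑ t : Fin T, ε t) := by
  have hδ : IsSignGradientTrajectory l γ ε δ0 δseq := ⟨hδ0, hrec⟩
  have hgrad := continuous_of_forall_norm_sub_le hL
  have : Nonempty (Fin D) := ⟨⟨0, hD⟩⟩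
  have hL0 := nonneg_of_forall_norm_sub_le hL
  set μ := prodGaussian T D
  set m := ⨅ t : Fin T, ∫ ω, (∑ i, |gradient l (δseq t ω) i|) ∂μ
  have hstep (t : Fin T) : ∫ ω, l (δseq (t + 1) ω) ∂μ ≤
      ∫ ω, l (δseq t ω) ∂μ + (-(c * m) * ε t + L * D / 2 * ε t ^ 2) := by
    have hdesc := hδ.integral_succ_le (μ := μ) hl hL0 hL t
    have hinner := hδ.mul_integral_sum_abs_le hgrad hγ t (hlow.mono fun ω h => h t)
    have hm : m ≤ ∫ ω, (∑ i, |gradient l (δseq t ω) i|) ∂μ :=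
      ciInf_le (Set.finite_range _).bddBelow t
    nlinarith [mul_le_mul_of_nonneg_left hm hc.le, (hε t).le]
  have hinf : sInf (Set.range l) ≤ ∫ ω, l (δseq T ω) ∂μ := by
    calc sInf (Set.range l) = ∫ _ω, sInf (Set.range l) ∂μ := by simp
      _ ≤ _ := integral_mono (integrable_const _) (hδ.integrable_comp hgrad hl.continuous le_rfl)
          fun ω => csInf_le hbdd ⟨_, rfl⟩
  have htel := le_add_sum_of_forall_succ_le (a := fun n => ∫ ω, l (δseq n ω) ∂μ) hstep
  simp only [hδ0, integral_const, probReal_univ, one_smul, Finset.sum_add_distrib,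
    ← Finset.mul_sum] at htel
  have hεsum : 0 < ∑ t, ε t := Finset.sum_pos (fun t _ => hε t) ⟨⟨0, hT⟩, Finset.mem_univ _⟩
  rw [le_div_iff₀ (mul_pos hc hεsum)]
  linarith
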